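/- Let K ∈ (-1,1)\{0}, b satisfy b' = √(1 - K cos(2b)), b(0)=0, and define x₃ : ℝ → ℝ by x₃' = K/(1+b'), x₃(0) = 0. Then x₃ satisfies x₃'(v) = (1 - b'(v))/cos(2b(v)) at every v where cos(2b(v)) ≠ 0, x₃ is odd, and x₃(v + W) = x₃(v) + x₃(W) for all v, where W > 0 is the number with b(W) = π. -/

import Mathlib

/-!
Since `|K| < 1`, the right-hand side `y ↦ √(1 - K cos 2y)` of the ODE for `b` is Lipschitz,
even and `π`-periodic, so uniqueness of solutions forces `b` to be odd and to satisfy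
`b (v + W) = b v + π`. Hence `x₃' = K / (1 + b')` is even and `W`-periodic, which makes `x₃`
odd and additive along `W`. The derivative formula is the identity
`K / (1 + s) = (1 - s) / c` for `s² = 1 - K c`.
-/

open Real Function

lemma abs_sqrt_sub_sqrt_le {m a c : ℝ} (hm : 0 < m) (ha : m ≤ a) (hc : m ≤ c) :
    |√a - √c| ≤ |a - c| / (2 * √m) := by
  have hsa : √m ≤ √a := Real.sqrt_le_sqrt ha
  have hsc : √m ≤ √c := Real.sqrt_le_sqrt hc
  rw [le_div_iff₀ (by positivity)]
  calc |√a - √c| * (2 * √m) ≤ |√a - √c| * (√a + √c) := by gcongr; linarith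
    _ = |(√a - √c) * (√a + √c)| := by
      rw [abs_mul, abs_of_nonneg (add_nonneg (sqrt_nonneg a) (sqrt_nonneg c))]
    _ = |a - c| := by
      congr 1
      linear_combination Real.mul_self_sqrt (hm.le.trans ha) - Real.mul_self_sqrt (hm.le.trans hc)

lemma lipschitzWith_sqrt_one_sub_mul_cos_two_mul {K : ℝ} (hK : |K| < 1) :
    LipschitzWith (|K| / √(1 - |K|)).toNNReal (fun y ↦ √(1 - K * cos (2 * y))) := by
  have hm : 0 < 1 - |K| := by linarith
  have hlow (y : ℝ) : 1 - |K| ≤ 1 - K * cos (2 * y) := by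
    have : K * cos (2 * y) ≤ |K| := (le_abs_self _).trans <| by
      rw [abs_mul]; exact mul_le_of_le_one_right (abs_nonneg K) (abs_cos_le_one _)
    linarith
  refine LipschitzWith.of_dist_le_mul fun x y ↦ ?_
  rw [Real.coe_toNNReal _ (by positivity), Real.dist_eq, Real.dist_eq]
  calc _ ≤ |(1 - K * cos (2 * x)) - (1 - K * cos (2 * y))| / (2 * √(1 - |K|)) :=
        abs_sqrt_sub_sqrt_le hm (hlow x) (hlow y)
    _ = |K| * |cos (2 * y) - cos (2 * x)| / (2 * √(1 - |K|)) := by rw [← abs_mul]; ring_nf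
    _ ≤ |K| * |2 * y - 2 * x| / (2 * √(1 - |K|)) := by
      gcongr |K| * ?_ / _; exact abs_cos_sub_cos_le _ _
    _ = |K| / √(1 - |K|) * |x - y| := by
      rw [show 2 * y - 2 * x = -(2 * (x - y)) by ring, abs_neg, abs_mul, abs_two]
      field_simp

section AutonomousODE

variable {L : NNReal} {F : ℝ → ℝ} {b : ℝ → ℝ}

lemma eq_of_hasDerivAt_of_lipschitzWith (hF : LipschitzWith L F) {f g : ℝ → ℝ}
    (hf : ∀ t, HasDerivAt f (F (f t)) t) (hg : ∀ t, HasDerivAt g (F (g t)) t) {t₀ : ℝ}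
    (h : f t₀ = g t₀) : f = g :=
  ODE_solution_unique_univ (v := fun _ ↦ F) (s := fun _ ↦ Set.univ)
    (fun _ ↦ hF.lipschitzOnWith) (fun t ↦ ⟨hf t, trivial⟩) (fun t ↦ ⟨hg t, trivial⟩) h

lemma odd_of_hasDerivAt_comp_of_even (hF : LipschitzWith L F) (hFe : F.Even)
    (hb : ∀ t, HasDerivAt b (F (b t)) t) (hb0 : b 0 = 0) : b.Odd := by
  have hsol (t : ℝ) : HasDerivAt (fun v ↦ -b (-v)) (F (-b (-t))) t := by
    have h := ((hb (-t)).comp t (hasDerivAt_neg t)).neg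
    rwa [mul_neg_one, neg_neg, ← hFe] at h
  have h := eq_of_hasDerivAt_of_lipschitzWith hF hsol hb (t₀ := 0) (by simp [hb0])
  intro v
  simpa using (congrFun h (-v)).symm

lemma add_const_of_hasDerivAt_comp_of_periodic {c W : ℝ} (hF : LipschitzWith L F)
    (hFp : Periodic F c) (hb : ∀ t, HasDerivAt b (F (b t)) t) (hbW : b W = b 0 + c) (v : ℝ) :
    b (v + W) = b v + c := by
  have hsol (t : ℝ) : HasDerivAt (fun v ↦ b (v + W) - c) (F (b (t + W) - c)) t := by
    rw [hFp.sub_eq]; exact ((hb (t + W)).comp_add_const t W).sub_const c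
  have h := eq_of_hasDerivAt_of_lipschitzWith hF hsol hb (t₀ := 0) (by simp [hbW])
  linarith [congrFun h v]

end AutonomousODE

section Antiderivative

variable {f g : ℝ → ℝ}

lemma odd_of_hasDerivAt_of_even (hf : ∀ t, HasDerivAt f (g t) t) (hg : g.Even) (hf0 : f 0 = 0) :
    f.Odd := by
  have hderiv (t : ℝ) : HasDerivAt (fun v ↦ f (-v) + f v) 0 t := by
    have h := ((hf (-t)).comp t (hasDerivAt_neg t)).add (hf t)
    rwa [hg t, mul_neg_one, neg_add_cancel] at h
  intro v
  have := is_const_of_deriv_eq_zero (fun t ↦ (hderiv t).differentiableAt)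
    (fun t ↦ (hderiv t).deriv) v 0
  simp only [neg_zero, hf0, add_zero] at this
  linarith

lemma add_of_hasDerivAt_of_periodic {W : ℝ} (hf : ∀ t, HasDerivAt f (g t) t) (hg : Periodic g W)
    (hf0 : f 0 = 0) (v : ℝ) : f (v + W) = f v + f W := by
  have hderiv (t : ℝ) : HasDerivAt (fun v ↦ f (v + W) - f v) 0 t := by
    have h := ((hf (t + W)).comp_add_const t W).sub (hf t)
    rwa [hg t, sub_self] at h
  have := is_const_of_deriv_eq_zero (fun t ↦ (hderiv t).differentiableAt)
    (fun t ↦ (hderiv t).deriv) v 0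
  simp only [zero_add, hf0, sub_zero] at this
  linarith

end Antiderivative

lemma div_one_add_sqrt_eq_one_sub_sqrt_div {K c : ℝ} (h : 0 ≤ 1 - K * c) (hc : c ≠ 0) :
    K / (1 + √(1 - K * c)) = (1 - √(1 - K * c)) / c := by
  have hs := Real.mul_self_sqrt h
  rw [div_eq_div_iff (by positivity) hc]
  linear_combination hs

theorem helicoid_x3_properties_general
    (K : ℝ) (hK : K ∈ Set.Ioo (-1 : ℝ) 1) (b x₃ : ℝ → ℝ)
    (hb : ∀ v : ℝ, HasDerivAt b (Real.sqrt (1 - K * Real.cos (2 * b v))) v)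
    (hb0 : b 0 = 0)
    (hx3 : ∀ v : ℝ,
      HasDerivAt x₃ (K / (1 + Real.sqrt (1 - K * Real.cos (2 * b v)))) v)
    (hx30 : x₃ 0 = 0) (W : ℝ) (hbW : b W = Real.pi) :
    (∀ v : ℝ, Real.cos (2 * b v) ≠ 0 →
      deriv x₃ v = (1 - Real.sqrt (1 - K * Real.cos (2 * b v))) / Real.cos (2 * b v)) ∧
    (∀ v : ℝ, x₃ (-v) = -x₃ v) ∧
    (∀ v : ℝ, x₃ (v + W) = x₃ v + x₃ W) := by
  have hK1 : |K| < 1 := abs_lt.mpr hK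
  have hF := lipschitzWith_sqrt_one_sub_mul_cos_two_mul hK1
  have hb_odd : b.Odd :=
    odd_of_hasDerivAt_comp_of_even hF (fun y ↦ by simp only [mul_neg, cos_neg]) hb hb0
  have hb_add : ∀ v, b (v + W) = b v + π :=
    add_const_of_hasDerivAt_comp_of_periodic hF
      (fun y ↦ by simp only [mul_add, cos_add_two_pi]) hb (by rw [hbW, hb0, zero_add])
  refine ⟨fun v hv ↦ ?_, odd_of_hasDerivAt_of_even hx3 (fun t ↦ ?_) hx30,
    add_of_hasDerivAt_of_periodic hx3 (fun t ↦ ?_) hx30⟩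
  · have hrad : 0 ≤ 1 - K * cos (2 * b v) := by
      nlinarith [abs_le.mp (abs_cos_le_one (2 * b v)), abs_lt.mp hK1]
    rw [(hx3 v).deriv, div_one_add_sqrt_eq_one_sub_sqrt_div hrad hv]
  · simp only [hb_odd t, mul_neg, cos_neg]
  · simp only [hb_add t, mul_add, cos_add_two_pi]

theorem helicoid_x3_properties
    (K : ℝ) (hK : K ∈ Set.Ioo (-1 : ℝ) 1) (hK0 : K ≠ 0) (b x₃ : ℝ → ℝ)
    (hb : ∀ v : ℝ, HasDerivAt b (Real.sqrt (1 - K * Real.cos (2 * b v))) v)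
    (hb0 : b 0 = 0)
    (hx3 : ∀ v : ℝ,
      HasDerivAt x₃ (K / (1 + Real.sqrt (1 - K * Real.cos (2 * b v)))) v)
    (hx30 : x₃ 0 = 0) (W : ℝ) (hW : 0 < W) (hbW : b W = Real.pi) :
    (∀ v : ℝ, Real.cos (2 * b v) ≠ 0 →
      deriv x₃ v = (1 - Real.sqrt (1 - K * Real.cos (2 * b v))) / Real.cos (2 * b v)) ∧
    (∀ v : ℝ, x₃ (-v) = -x₃ v) ∧
    (∀ v : ℝ, x₃ (v + W) = x₃ v + x₃ W) :=
  helicoid_x3_properties_general K hK b x₃ hb hb0 hx3 hx30 W hbW
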